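/- Let θ : ℝ → ℝ be continuous, non-expanding, non-decreasing, and not constant. Then θ'(t) := ∫_{-∞}^{∞} θ(r+t)·(e^{-|r|}/2) dr is strictly increasing on ℝ. -/
import Mathlib

open MeasureTheory Real

/-- The smooth-out of θ: convolution with the probability density e^{-|r|}/2. -/
noncomputable def smoothOut (θ : ℝ → ℝ) (t : ℝ) : ℝ :=
  ∫ r : ℝ, θ (r + t) * (Real.exp (-|r|) / 2)

open Filter Asymptotics in
lemma integrable_linexp (C : ℝ) :
    Integrable (fun r : ℝ => (C + |r|) * Real.exp (-|r|)) := by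
  have hcont : Continuous fun r : ℝ => (C + |r|) * Real.exp (-|r|) :=
    (continuous_const.add continuous_abs).mul continuous_abs.neg.rexp
  have hIoi : IntegrableOn (fun r : ℝ => (C + |r|) * Real.exp (-|r|)) (Set.Ioi 0) := by
    apply integrable_of_isBigO_exp_neg (a := 0) (b := 1/2) one_half_pos hcont.continuousOn
    have h0 : Tendsto (fun y : ℝ => y * Real.exp (-y)) atTop (nhds 0) := by
      simpa using Real.tendsto_pow_mul_exp_neg_atTop_nhds_zero 1
    have hhalf : Tendsto (fun x : ℝ => x / 2) atTop atTop :=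
      tendsto_id.atTop_div_const two_pos
    have h2 : Tendsto (fun x : ℝ => (x/2) * Real.exp (-(x/2))) atTop (nhds 0) := h0.comp hhalf
    have hE : Tendsto (fun x : ℝ => Real.exp (-(x/2))) atTop (nhds 0) :=
      Real.tendsto_exp_atBot.comp (tendsto_neg_atTop_atBot.comp hhalf)
    have hT : Tendsto (fun x : ℝ => (C + x) * Real.exp (-(x/2))) atTop (nhds 0) := by
      have h3 := (hE.const_mul C).add (h2.const_mul 2)
      simp only [mul_zero, add_zero] at h3
      apply h3.congr
      intro x; ring
    have hO1 : (fun x : ℝ => (C + x) * Real.exp (-(x/2))) =O[atTop] (fun _ => (1:ℝ)) :=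
      hT.isBigO_one ℝ
    have hO2 := hO1.mul (isBigO_refl (fun x : ℝ => Real.exp (-(x/2))) atTop)
    have heq : (fun x : ℝ => (C + |x|) * Real.exp (-|x|)) =ᶠ[atTop]
        (fun x => ((C + x) * Real.exp (-(x/2))) * Real.exp (-(x/2))) := by
      filter_upwards [eventually_ge_atTop (0:ℝ)] with x hx
      rw [abs_of_nonneg hx, show (-x) = -(x/2) + -(x/2) by ring, Real.exp_add, mul_assoc]
    have hrhs : (fun x : ℝ => (fun _ : ℝ => (1:ℝ)) x * Real.exp (-(x/2))) =
        fun x : ℝ => Real.exp (-(1/2) * x) := by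
      funext x; rw [one_mul]; congr 1; ring
    rw [← hrhs]
    exact heq.trans_isBigO hO2
  rw [← integrableOn_univ, ← Set.Iio_union_Ici (a := (0 : ℝ)), integrableOn_union,
    integrableOn_Ici_iff_integrableOn_Ioi]
  refine ⟨?_, hIoi⟩
  rw [← (Measure.measurePreserving_neg (volume : Measure ℝ)).integrableOn_comp_preimage
      (Homeomorph.neg ℝ).measurableEmbedding]
  simpa only [Function.comp_def, abs_neg, Set.neg_preimage, Set.neg_Iio, neg_zero] using hIoi

lemma smoothOut_integrable (θ : ℝ → ℝ) (hc : Continuous θ) (hl : LipschitzWith 1 θ) (t : ℝ) :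
    Integrable (fun r : ℝ => θ (r + t) * (Real.exp (-|r|) / 2)) := by
  have hint := (integrable_linexp (|θ t|)).div_const 2
  apply hint.mono'
  · exact ((hc.comp (continuous_id.add continuous_const)).mul
      ((continuous_abs.neg.rexp).div_const 2)).aestronglyMeasurable
  · filter_upwards with r
    have hb : |θ (r + t)| ≤ |θ t| + |r| := by
      have h4 := hl.dist_le_mul (r + t) t
      simp only [NNReal.coe_one, one_mul, Real.dist_eq] at h4
      have h2 : |r + t - t| = |r| := by ring_nf
      rw [h2] at h4
      have h5 := abs_sub_abs_le_abs_sub (θ (r + t)) (θ t)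
      linarith
    have hexppos : (0:ℝ) < Real.exp (-|r|) := Real.exp_pos _
    rw [norm_mul, Real.norm_eq_abs, Real.norm_eq_abs, abs_div, abs_of_pos hexppos, abs_two]
    calc |θ (r + t)| * (Real.exp (-|r|) / 2) ≤ (|θ t| + |r|) * (Real.exp (-|r|) / 2) := by
          apply mul_le_mul_of_nonneg_right hb (by positivity)
      _ = (|θ t| + |r|) * Real.exp (-|r|) / 2 := by ring

theorem smoothOut_strictMono (θ : ℝ → ℝ)
    (hc : Continuous θ) (hl : LipschitzWith 1 θ) (hm : Monotone θ)
    (hnc : ¬ ∃ c : ℝ, ∀ t : ℝ, θ t = c) :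
    StrictMono (smoothOut θ) := by
  intro s t hst
  set δ := t - s with hδ
  have hδpos : 0 < δ := by simp [hδ]; linarith
  -- there is r₀ with θ (r₀ + s) < θ (r₀ + t)
  have hr0 : ∃ r₀ : ℝ, θ (r₀ + s) < θ (r₀ + t) := by
    by_contra h
    push_neg at h
    have heq : ∀ x : ℝ, θ (x + δ) = θ x := by
      intro x
      have h1 := h (x - s)
      have h2 : θ (x - s + s) ≤ θ (x - s + t) := hm (by linarith)
      have e1 : x - s + s = x := by ring
      have e2 : x - s + t = x + δ := by rw [hδ]; ring
      rw [e1, e2] at h1 h2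
      linarith
    have hn : ∀ n : ℕ, θ (n * δ) = θ 0 := by
      intro n
      induction n with
      | zero => simp
      | succ n ih =>
        have : ((n : ℝ) + 1) * δ = n * δ + δ := by ring
        rw [Nat.cast_succ, this, heq, ih]
    have hnneg : ∀ n : ℕ, θ (-(n * δ)) = θ 0 := by
      intro n
      induction n with
      | zero => simp
      | succ n ih =>
        have e : (-(((n:ℝ) + 1) * δ)) + δ = -(n * δ) := by ring
        have := heq (-(((n:ℝ)+1) * δ))
        rw [e] at this
        rw [Nat.cast_succ, ← ih, ← this]
    apply hnc
    refine ⟨θ 0, fun x => ?_⟩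
    obtain ⟨n, hn'⟩ := exists_nat_ge (|x| / δ)
    have hxn : |x| ≤ n * δ := by
      rw [div_le_iff₀ hδpos] at hn'; linarith
    have hle : θ x ≤ θ 0 := by
      calc θ x ≤ θ (n * δ) := hm (le_trans (le_abs_self x) hxn)
        _ = θ 0 := hn n
    have hge : θ 0 ≤ θ x := by
      calc θ 0 = θ (-(n * δ)) := (hnneg n).symm
        _ ≤ θ x := hm (by have := neg_abs_le x; linarith)
    linarith
  obtain ⟨r₀, hr₀⟩ := hr0
  -- the difference function
  set f : ℝ → ℝ := fun r => (θ (r + t) - θ (r + s)) * (Real.exp (-|r|) / 2) with hf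
  have hfnonneg : 0 ≤ f := by
    intro r
    apply mul_nonneg
    · have : θ (r + s) ≤ θ (r + t) := hm (by linarith)
      linarith
    · positivity
  have hfi : Integrable f := by
    have := (smoothOut_integrable θ hc hl t).sub (smoothOut_integrable θ hc hl s)
    convert this using 1
    funext r; simp [hf]; ring
  have hfcont : Continuous f := by
    apply Continuous.mul
    · exact (hc.comp (continuous_id.add continuous_const)).sub
        (hc.comp (continuous_id.add continuous_const))
    · exact (continuous_abs.neg.rexp).div_const 2
  have hpos : 0 < ∫ r, f r := by
    rw [integral_pos_iff_support_of_nonneg hfnonneg hfi]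
    have hopen : IsOpen {r : ℝ | 0 < f r} := isOpen_lt continuous_const hfcont
    have hne : ({r : ℝ | 0 < f r}).Nonempty := by
      refine ⟨r₀, ?_⟩
      have : 0 < θ (r₀ + t) - θ (r₀ + s) := by linarith
      simp only [Set.mem_setOf_eq, hf]
      positivity
    have hsub : {r : ℝ | 0 < f r} ⊆ Function.support f := by
      intro r hr; exact ne_of_gt hr
    calc (0:ENNReal) < volume {r : ℝ | 0 < f r} := hopen.measure_pos volume hne
      _ ≤ volume (Function.support f) := measure_mono hsub
  have hint : ∫ r, f r = smoothOut θ t - smoothOut θ s := by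
    rw [smoothOut, smoothOut, ← integral_sub (smoothOut_integrable θ hc hl t)
      (smoothOut_integrable θ hc hl s)]
    congr 1; funext r; simp [hf]; ring
  rw [hint] at hpos
  linarith
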